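/- arXiv:1304.3348 — 4 statements merged into one kernel-verified Lean document; each statement's English description precedes it below -/
import Mathlib

section
/- Let Γ be a finitely generated residually finite discrete group with finite generating set S, and let N₁ ⊇ N₂ ⊇ … be a nested sequence of finite-index normal subgroups of Γ with trivial intersection. Let X be a coarse disjoint union of the finite Cayley graphs X_i = Cay(Γ/N_i, S) (a box space of Γ). If X admits a fibred coarse embedding into Hilbert space, then Γ is a-T-menable: there exists a function f : Γ → ℝ such that (i) f(e) = 0 and f(g) = f(g⁻¹) for all g ∈ Γ; (ii) for all g₁, …, g_n ∈ Γ and σ₁, …, σ_n ∈ ℝ with Σ_j σ_j = 0 one has Σ_{j,k} σ_j σ_k f(g_j⁻¹ g_k) ≤ 0; and (iii) f is proper, i.e. for every C > 0 the set {g ∈ Γ : f(g) ≤ C} is finite. -/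
/-- The word metric on a quotient group `Γ ⧸ N` induced by (the image of) a
generating set `S ⊆ Γ`: the least length of a word in `S ∪ S⁻¹` translating
one coset to the other. -/
noncomputable def quotientWordDist {Γ : Type*} [Group Γ] (S : Finset Γ)
    {N : Subgroup Γ} (x y : Γ ⧸ N) : ℕ :=
  sInf {n : ℕ | ∃ w : List Γ, w.length = n ∧ (∀ g ∈ w, g ∈ S ∨ g⁻¹ ∈ S) ∧ w.prod • x = y}

/-!
For `g ∈ Γ` and each `i`, average over `x ∈ Γ ⧸ Nᵢ` the squared displacement
`‖tₓ(g x)(s(g x)) - tₓ(x)(s(x))‖²` of the section, read in the trivialisation at `x`. The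
trivialisations agree up to isometries where their balls overlap, so once `lᵢ` exceeds the word
lengths involved the base point may be moved freely; the averages then become averages of kernels
`‖vⱼ - vₖ‖²` in a Hilbert space, which are conditionally of negative type, and `ρ₂` bounds them.
An ultralimit over `i` gives `f`. It is proper because the `Nᵢ` decrease to the trivial group:
an element outside the `m`-ball of `Γ` eventually moves every point of `Γ ⧸ Nᵢ` by more than `m`,
and then `ρ₁` forces the average up.
-/

open Filter Topology Finset
open scoped RealInnerProductSpace BigOperators

theorem sum_sum_mul_norm_sub_sq {ι E : Type*} [Fintype ι] [NormedAddCommGroup E]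
    [InnerProductSpace ℝ E] (σ : ι → ℝ) (v : ι → E) (hσ : ∑ j, σ j = 0) :
    ∑ j, ∑ k, σ j * σ k * ‖v j - v k‖ ^ 2 = -2 * ‖∑ j, σ j • v j‖ ^ 2 := by
  have hinner : ‖∑ j, σ j • v j‖ ^ 2 = ∑ j, ∑ k, σ j * σ k * ⟪v j, v k⟫ := by
    rw [← real_inner_self_eq_norm_sq, sum_inner]
    refine sum_congr rfl fun j _ => ?_
    simp only [inner_sum, real_inner_smul_left, real_inner_smul_right]
    exact sum_congr rfl fun k _ => by ring
  have hsplit : ∀ j k, σ j * σ k * ‖v j - v k‖ ^ 2 =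
      σ j * ‖v j‖ ^ 2 * σ k + σ j * (σ k * ‖v k‖ ^ 2) - 2 * (σ j * σ k * ⟪v j, v k⟫) := by
    intro j k
    rw [norm_sub_sq_real]
    ring
  simp only [hsplit, sum_add_distrib, sum_sub_distrib, ← mul_sum, ← sum_mul, hσ, hinner]
  ring

section DisplacementEnergy

variable {Γ Q E : Type*} [Group Γ] [MulAction Γ Q] [Fintype Q] [NormedAddCommGroup E]

/-- `near x z` says that `z` lies in the ball where the trivialisation at `x` is defined, and
`u x z` is the section at `z` read in that trivialisation. -/
def LocallyCompatible (near : Q → Q → Prop) (u : Q → Q → E) : Prop :=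
  ∀ x y z z', near x z → near x z' → near y z → near y z' →
    ‖u x z - u x z'‖ = ‖u y z - u y z'‖

noncomputable def displacementEnergy (u : Q → Q → E) (g : Γ) : ℝ :=
  𝔼 x, ‖u x (g • x) - u x x‖ ^ 2

variable {near : Q → Q → Prop} {u : Q → Q → E}

@[simp]
theorem displacementEnergy_one : displacementEnergy u (1 : Γ) = 0 := by
  simp [displacementEnergy]

theorem displacementEnergy_nonneg (g : Γ) : 0 ≤ displacementEnergy u g :=
  expect_nonneg fun _ _ => sq_nonneg _

theorem displacementEnergy_le [Nonempty Q] {g : Γ} {B : ℝ}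
    (h : ∀ x, ‖u x (g • x) - u x x‖ ≤ B) : displacementEnergy u g ≤ B ^ 2 :=
  expect_le univ_nonempty fun x _ => pow_le_pow_left₀ (norm_nonneg _) (h x) 2

theorem le_displacementEnergy [Nonempty Q] {g : Γ} {B : ℝ} (hB : 0 ≤ B)
    (h : ∀ x, B ≤ ‖u x (g • x) - u x x‖) : B ^ 2 ≤ displacementEnergy u g :=
  le_expect univ_nonempty fun x _ => pow_le_pow_left₀ hB (h x) 2

/-- Substituting `x = b⁻¹ • y` and moving the base point from `b⁻¹ • y` to `y`. -/
theorem displacementEnergy_inv_mul (hu : LocallyCompatible near u) (hnear : ∀ x, near x x)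
    {a b : Γ} (ha : ∀ x, near x (a⁻¹ • x)) (hb : ∀ x, near x (b⁻¹ • x))
    (hab : ∀ x, near x ((a⁻¹ * b) • x)) :
    displacementEnergy u (a⁻¹ * b) = 𝔼 y, ‖u y (a⁻¹ • y) - u y (b⁻¹ • y)‖ ^ 2 := by
  refine (Fintype.expect_bijective (b⁻¹ • ·) (MulAction.bijective b⁻¹) _ _ fun y => ?_).symm
  have hy : (a⁻¹ * b) • b⁻¹ • y = a⁻¹ • y := by rw [smul_smul, mul_inv_cancel_right]
  have hnear_y : near (b⁻¹ • y) (a⁻¹ • y) := hy ▸ hab (b⁻¹ • y)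
  simp only [hy, hu y (b⁻¹ • y) _ _ (ha y) (hb y) hnear_y (hnear _)]

theorem displacementEnergy_inv (hu : LocallyCompatible near u) (hnear : ∀ x, near x x) {g : Γ}
    (hg : ∀ x, near x (g • x)) (hg' : ∀ x, near x (g⁻¹ • x)) :
    displacementEnergy u g⁻¹ = displacementEnergy u g := by
  have h := displacementEnergy_inv_mul hu hnear (a := 1) (b := g) (by simpa using hnear) hg'
    (by simpa using hg)
  rw [inv_one, one_mul] at h
  rw [h, displacementEnergy]
  exact expect_congr rfl fun x _ => by rw [one_smul, norm_sub_rev]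

theorem sum_sum_mul_displacementEnergy_nonpos [InnerProductSpace ℝ E] {ι : Type*} [Fintype ι]
    (hu : LocallyCompatible near u) (hnear : ∀ x, near x x) (g : ι → Γ) (σ : ι → ℝ)
    (hσ : ∑ j, σ j = 0) (hg : ∀ j x, near x ((g j)⁻¹ • x))
    (hgg : ∀ j k x, near x (((g j)⁻¹ * g k) • x)) :
    ∑ j, ∑ k, σ j * σ k * displacementEnergy u ((g j)⁻¹ * g k) ≤ 0 := by
  calc ∑ j, ∑ k, σ j * σ k * displacementEnergy u ((g j)⁻¹ * g k)
      = 𝔼 y, ∑ j, ∑ k, σ j * σ k * ‖u y ((g j)⁻¹ • y) - u y ((g k)⁻¹ • y)‖ ^ 2 := by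
        simp only [displacementEnergy_inv_mul hu hnear (hg _) (hg _) (hgg _ _), mul_expect,
          expect_sum_comm]
    _ ≤ 𝔼 _y : Q, (0 : ℝ) := expect_le_expect fun y _ => by
        rw [sum_sum_mul_norm_sub_sq σ _ hσ]
        exact mul_nonpos_of_nonpos_of_nonneg (by norm_num) (sq_nonneg _)
    _ = 0 := expect_const_zero _

end DisplacementEnergy

theorem exists_tendsto_of_eventually_mem_compact {ι α β : Type*} [TopologicalSpace β]
    (U : Ultrafilter ι) (φ : ι → α → β) (h : ∀ a, ∃ K, IsCompact K ∧ ∀ᶠ i in U, φ i a ∈ K) :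
    ∃ f : α → β, ∀ a, Tendsto (φ · a) U (𝓝 (f a)) := by
  choose K hK hφK using h
  choose f _ hf using fun a =>
    (hK a).ultrafilter_le_nhds (U.map (φ · a)) (le_principal_iff.2 (hφK a))
  exact ⟨f, hf⟩

theorem exists_proper_conditionallyNegative_of_eventually {Γ : Type*} [Group Γ]
    (φ : ℕ → Γ → ℝ) (h_one : ∀ i, φ i 1 = 0)
    (h_inv : ∀ g, ∀ᶠ i in atTop, φ i g⁻¹ = φ i g)
    (h_cnd : ∀ (n : ℕ) (g : Fin n → Γ) (σ : Fin n → ℝ), ∑ j, σ j = 0 →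
      ∀ᶠ i in atTop, ∑ j, ∑ k, σ j * σ k * φ i ((g j)⁻¹ * g k) ≤ 0)
    (h_bdd : ∀ g, ∃ B, ∀ᶠ i in atTop, φ i g ∈ Set.Icc 0 B)
    (h_proper : ∀ C, ∃ F : Set Γ, F.Finite ∧ ∀ g ∉ F, ∀ᶠ i in atTop, C ≤ φ i g) :
    ∃ f : Γ → ℝ,
      f 1 = 0 ∧
      (∀ g : Γ, f g = f g⁻¹) ∧
      (∀ (n : ℕ) (g : Fin n → Γ) (σ : Fin n → ℝ), ∑ j, σ j = 0 →
        ∑ j, ∑ k, σ j * σ k * f ((g j)⁻¹ * g k) ≤ 0) ∧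
      (∀ C : ℝ, 0 < C → {g : Γ | f g ≤ C}.Finite) := by
  have hU {p : ℕ → Prop} (hp : ∀ᶠ i in atTop, p i) : ∀ᶠ i in hyperfilter ℕ, p i :=
    hp.filter_mono Nat.hyperfilter_le_atTop
  obtain ⟨f, hf⟩ := exists_tendsto_of_eventually_mem_compact (hyperfilter ℕ) φ fun g =>
    let ⟨B, hB⟩ := h_bdd g
    ⟨Set.Icc 0 B, isCompact_Icc, hU hB⟩
  refine ⟨f, ?_, fun g => ?_, fun n g σ hσ => ?_, fun C _ => ?_⟩
  · exact tendsto_nhds_unique (hf 1) (by simp only [h_one, tendsto_const_nhds])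
  · exact tendsto_nhds_unique (hf g) ((hf g⁻¹).congr' (hU (h_inv g)))
  · exact le_of_tendsto (tendsto_finsetSum _ fun j _ => tendsto_finsetSum _ fun k _ =>
      (hf _).const_mul _) (hU (h_cnd n g σ hσ))
  · obtain ⟨F, hF, hφF⟩ := h_proper (C + 1)
    refine hF.subset fun g hg => by_contra fun hgF => ?_
    have : C + 1 ≤ f g := ge_of_tendsto (hf g) (hU (hφF g hgF))
    exact (lt_of_lt_of_le (lt_add_one C) this).not_ge hg

section Words

variable {Γ : Type*} [Group Γ] (S : Finset Γ)

def wordBall (m : ℕ) : Set Γ :=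
  {g | ∃ w : List Γ, w.length ≤ m ∧ (∀ a ∈ w, a ∈ S ∨ a⁻¹ ∈ S) ∧ w.prod = g}

variable {S}

theorem wordBall_mono {m n : ℕ} (hmn : m ≤ n) : wordBall S m ⊆ wordBall S n :=
  fun _ ⟨w, hw, hwS, hwg⟩ => ⟨w, hw.trans hmn, hwS, hwg⟩

theorem finite_wordBall (m : ℕ) : (wordBall S m).Finite := by
  let T : Set Γ := S ∪ (S : Set Γ)⁻¹
  have : Finite T := (S.finite_toSet.union S.finite_toSet.inv).to_subtype
  refine ((List.finite_length_le T m).image fun w => (w.map (↑)).prod).subset ?_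
  rintro _ ⟨w, hw, hwS, rfl⟩
  lift w to List T using hwS
  exact ⟨w, by simpa using hw, rfl⟩

theorem exists_mem_wordBall (hgen : Subgroup.closure (S : Set Γ) = ⊤) (g : Γ) :
    ∃ m, g ∈ wordBall S m := by
  have hg : g ∈ Submonoid.closure ((S : Set Γ) ∪ (S : Set Γ)⁻¹) := by
    rw [← Subgroup.closure_toSubmonoid, hgen]
    trivial
  obtain ⟨w, hw, rfl⟩ := Submonoid.exists_list_of_mem_closure hg
  exact ⟨w.length, w, le_rfl, hw, rfl⟩

theorem quotientWordDist_smul_le {N : Subgroup Γ} {g : Γ} {m : ℕ} (hg : g ∈ wordBall S m)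
    (x : Γ ⧸ N) : quotientWordDist S x (g • x) ≤ m := by
  obtain ⟨w, hwm, hw, rfl⟩ := hg
  rw [quotientWordDist]
  exact le_trans (Nat.sInf_le ⟨w, rfl, hw, rfl⟩) hwm

theorem exists_mem_wordBall_smul_eq (hgen : Subgroup.closure (S : Set Γ) = ⊤) {N : Subgroup Γ}
    (x y : Γ ⧸ N) : ∃ p ∈ wordBall S (quotientWordDist S x y), p • x = y := by
  obtain ⟨g, rfl⟩ := MulAction.exists_smul_eq Γ x y
  obtain ⟨m, w, -, hw, rfl⟩ := exists_mem_wordBall hgen g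
  rw [quotientWordDist]
  obtain ⟨v, hv, hvS, hvx⟩ := Nat.sInf_mem (⟨w.length, w, rfl, hw, rfl⟩ : Set.Nonempty
    {n : ℕ | ∃ v : List Γ, v.length = n ∧ (∀ a ∈ v, a ∈ S ∨ a⁻¹ ∈ S) ∧ v.prod • x = w.prod • x})
  exact ⟨v.prod, ⟨v, hv.le, hvS, rfl⟩, hvx⟩

end Words

theorem mem_of_smul_eq_self {Γ : Type*} [Group Γ] {N : Subgroup Γ} [N.Normal] {g : Γ}
    {x : Γ ⧸ N} (h : g • x = x) : g ∈ N := by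
  induction x using QuotientGroup.induction_on with
  | H a =>
    rw [MulAction.Quotient.smul_mk] at h
    rw [← QuotientGroup.eq_one_iff]
    simpa using h

theorem eventually_notMem_of_antitone {Γ : Type*} [Group Γ] {N : ℕ → Subgroup Γ}
    (hN : Antitone N) (htriv : ⨅ i, N i = ⊥) {g : Γ} (hg : g ≠ 1) : ∀ᶠ i in atTop, g ∉ N i := by
  obtain ⟨i, hi⟩ : ∃ i, g ∉ N i := by
    by_contra! h
    exact hg (by simpa [htriv] using Subgroup.mem_iInf.2 h)
  exact eventually_atTop.2 ⟨i, fun j hij hj => hi (hN hij hj)⟩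

theorem eventually_lt_quotientWordDist_smul {Γ : Type*} [Group Γ] {S : Finset Γ}
    (hgen : Subgroup.closure (S : Set Γ) = ⊤) {N : ℕ → Subgroup Γ} (hnorm : ∀ i, (N i).Normal)
    (hN : Antitone N) (htriv : ⨅ i, N i = ⊥) {g : Γ} {m : ℕ} (hg : g ∉ wordBall S m) :
    ∀ᶠ i in atTop, ∀ x : Γ ⧸ N i, m < quotientWordDist S x (g • x) := by
  have hfar : ∀ᶠ i in atTop, ∀ p ∈ wordBall S m, g⁻¹ * p ∉ N i :=
    (finite_wordBall m).eventually_all.2 fun p hp =>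
      eventually_notMem_of_antitone hN htriv fun h => hg (inv_mul_eq_one.1 h ▸ hp)
  filter_upwards [hfar] with i hi x
  by_contra! hle
  obtain ⟨p, hp, hpx⟩ := exists_mem_wordBall_smul_eq hgen x (g • x)
  have := hnorm i
  exact hi p (wordBall_mono hle hp) (mem_of_smul_eq_self (by rw [mul_smul, hpx, inv_smul_smul]))

section BoxSpace

variable {Γ : Type*} [Group Γ] {S : Finset Γ} {N : ℕ → Subgroup Γ}
  [MetricSpace ((i : ℕ) × (Γ ⧸ N i))] {l : ℕ → ℝ}
  {H : ((i : ℕ) × (Γ ⧸ N i)) → Type*} [∀ x, NormedAddCommGroup (H x)] [∀ x, NormedSpace ℝ (H x)]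
  {E : Type*} [NormedAddCommGroup E] [NormedSpace ℝ E]
  {t : ∀ _x z : (i : ℕ) × (Γ ⧸ N i), H z →ᵃⁱ[ℝ] E} {s : ∀ x, H x}

variable (S N) in
def IsQuotientWordMetric : Prop :=
  ∀ (i : ℕ) (a b : Γ ⧸ N i), dist (⟨i, a⟩ : (i : ℕ) × (Γ ⧸ N i)) ⟨i, b⟩ = quotientWordDist S a b

variable (t s) in
noncomputable def trivialisedSection (i : ℕ) (x z : Γ ⧸ N i) : E :=
  t ⟨i, x⟩ ⟨i, z⟩ (s ⟨i, z⟩)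

theorem locallyCompatible_trivialisedSection
    (ht2 : ∀ x y : (i : ℕ) × (Γ ⧸ N i), x.1 = y.1 →
      (∃ w : (i : ℕ) × (Γ ⧸ N i), dist w x ≤ l x.1 ∧ dist w y ≤ l y.1) →
      ∃ T : E →ᵃⁱ[ℝ] E, ∀ z : (i : ℕ) × (Γ ⧸ N i),
        dist z x ≤ l x.1 → dist z y ≤ l y.1 →
        ∀ v : H z, t x z v = T (t y z v)) (i : ℕ) :
    LocallyCompatible (fun x z : Γ ⧸ N i => dist (⟨i, z⟩ : (i : ℕ) × (Γ ⧸ N i)) ⟨i, x⟩ ≤ l i)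
      (trivialisedSection t s i) := by
  intro x y z z' hxz hxz' hyz hyz'
  obtain ⟨T, hT⟩ := ht2 ⟨i, x⟩ ⟨i, y⟩ rfl ⟨⟨i, z⟩, hxz, hyz⟩
  simp only [trivialisedSection, hT _ hxz hyz, hT _ hxz' hyz', ← dist_eq_norm, T.dist_map]

theorem dist_smul_le_of_mem_wordBall
    (hword : IsQuotientWordMetric S N)
    {g : Γ} {m : ℕ} (hg : g ∈ wordBall S m) (i : ℕ) (x : Γ ⧸ N i) :
    dist (⟨i, g • x⟩ : (i : ℕ) × (Γ ⧸ N i)) ⟨i, x⟩ ≤ m := by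
  rw [dist_comm, hword]
  exact_mod_cast quotientWordDist_smul_le hg x

theorem eventually_dist_smul_le (hgen : Subgroup.closure (S : Set Γ) = ⊤)
    (hword : IsQuotientWordMetric S N)
    (hl : Tendsto l atTop atTop) (g : Γ) :
    ∀ᶠ i in atTop, ∀ x : Γ ⧸ N i, dist (⟨i, g • x⟩ : (i : ℕ) × (Γ ⧸ N i)) ⟨i, x⟩ ≤ l i := by
  obtain ⟨m, hm⟩ := exists_mem_wordBall hgen g
  filter_upwards [hl.eventually_ge_atTop (m : ℝ)] with i hi x
  exact (dist_smul_le_of_mem_wordBall hword hm i x).trans hi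

theorem eventually_displacementEnergy_le [∀ i, Fintype (Γ ⧸ N i)] {ρ₂ : ℝ → ℝ}
    (hword : IsQuotientWordMetric S N)
    (hl : Tendsto l atTop atTop)
    (ht1 : ∀ x z z' : (i : ℕ) × (Γ ⧸ N i), dist z x ≤ l x.1 → dist z' x ≤ l x.1 →
      ‖t x z (s z) - t x z' (s z')‖ ≤ ρ₂ (dist z z'))
    (hρ₂ : Monotone ρ₂) {g : Γ} {m : ℕ} (hg : g ∈ wordBall S m) :
    ∀ᶠ i in atTop, displacementEnergy (trivialisedSection t s i) g ≤ ρ₂ m ^ 2 := by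
  filter_upwards [hl.eventually_ge_atTop (m : ℝ)] with i hi
  refine displacementEnergy_le fun x => ?_
  have hgx := dist_smul_le_of_mem_wordBall hword hg i x
  have hx : dist (⟨i, x⟩ : (i : ℕ) × (Γ ⧸ N i)) ⟨i, x⟩ ≤ l i := by
    simpa using (Nat.cast_nonneg m).trans hi
  exact (ht1 ⟨i, x⟩ ⟨i, g • x⟩ ⟨i, x⟩ (hgx.trans hi) hx).trans (hρ₂ hgx)

theorem exists_finite_eventually_le_displacementEnergy [∀ i, Fintype (Γ ⧸ N i)] {ρ₁ : ℝ → ℝ}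
    (hgen : Subgroup.closure (S : Set Γ) = ⊤) (hnorm : ∀ i, (N i).Normal) (hN : Antitone N)
    (htriv : ⨅ i, N i = ⊥)
    (hword : IsQuotientWordMetric S N)
    (hl : Tendsto l atTop atTop)
    (ht1 : ∀ x z z' : (i : ℕ) × (Γ ⧸ N i), dist z x ≤ l x.1 → dist z' x ≤ l x.1 →
      ρ₁ (dist z z') ≤ ‖t x z (s z) - t x z' (s z')‖)
    (hρ₁ : Tendsto ρ₁ atTop atTop) (C : ℝ) :
    ∃ F : Set Γ, F.Finite ∧
      ∀ g ∉ F, ∀ᶠ i in atTop, C ≤ displacementEnergy (trivialisedSection t s i) g := by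
  obtain ⟨R, hR⟩ := eventually_atTop.1 (hρ₁.eventually_ge_atTop (max C 1))
  refine ⟨wordBall S ⌈R⌉₊, finite_wordBall _, fun g hg => ?_⟩
  filter_upwards [eventually_lt_quotientWordDist_smul hgen hnorm hN htriv hg,
    eventually_dist_smul_le hgen hword hl g, hl.eventually_ge_atTop 0] with i hfar hgx hl0
  have hfar' (x : Γ ⧸ N i) : R ≤ dist (⟨i, g • x⟩ : (i : ℕ) × (Γ ⧸ N i)) ⟨i, x⟩ := by
    rw [dist_comm, hword]
    exact (Nat.le_ceil R).trans (by exact_mod_cast (hfar x).le)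
  have hx (x : Γ ⧸ N i) : dist (⟨i, x⟩ : (i : ℕ) × (Γ ⧸ N i)) ⟨i, x⟩ ≤ l i := by simpa using hl0
  calc C ≤ max C 1 := le_max_left _ _
    _ ≤ max C 1 ^ 2 := le_self_pow₀ (le_max_right _ _) two_ne_zero
    _ ≤ _ := le_displacementEnergy (zero_le_one.trans (le_max_right C 1)) fun x =>
      (hR _ (hfar' x)).trans (ht1 ⟨i, x⟩ ⟨i, g • x⟩ ⟨i, x⟩ (hgx x) (hx x))

end BoxSpace

theorem box_space_fibred_coarse_embedding_implies_aTmenable_general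
    (Γ : Type*) [Group Γ] (S : Finset Γ)
    (hgen : Subgroup.closure (S : Set Γ) = ⊤)
    (N : ℕ → Subgroup Γ)
    (hnorm : ∀ i, (N i).Normal)
    (hFI : ∀ i, (N i).FiniteIndex)
    (hnested : ∀ i, N (i + 1) ≤ N i)
    (htriv : (⨅ i, N i) = ⊥)
    -- `X` is a coarse disjoint union of the Cayley graphs `Cay(Γ/Nᵢ, S)`
    [MetricSpace ((i : ℕ) × (Γ ⧸ N i))]
    (hword : ∀ (i : ℕ) (a b : Γ ⧸ N i),
      dist (⟨i, a⟩ : (i : ℕ) × (Γ ⧸ N i)) (⟨i, b⟩ : (i : ℕ) × (Γ ⧸ N i))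
        = (quotientWordDist S a b : ℝ))
    -- fibred coarse embedding data for `X`
    (H : ((i : ℕ) × (Γ ⧸ N i)) → Type*)
    [∀ x, NormedAddCommGroup (H x)] [∀ x, InnerProductSpace ℝ (H x)]
    (s : ∀ x, H x)
    (ρ₁ ρ₂ : ℝ → ℝ) (hρ₂mono : Monotone ρ₂)
    (hρ₁ : Filter.Tendsto ρ₁ Filter.atTop Filter.atTop)
    (l : ℕ → ℝ)
    (hl : Filter.Tendsto l Filter.atTop Filter.atTop)
    (E : Type*) [NormedAddCommGroup E] [InnerProductSpace ℝ E]
    (t : ∀ (_x z : (i : ℕ) × (Γ ⧸ N i)), H z →ᵃⁱ[ℝ] E)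
    -- condition (1): control of the section through each local trivialisation
    (ht1 : ∀ x z z' : (i : ℕ) × (Γ ⧸ N i),
      dist z x ≤ l x.1 → dist z' x ≤ l x.1 →
      ρ₁ (dist z z') ≤ ‖t x z (s z) - t x z' (s z')‖ ∧
      ‖t x z (s z) - t x z' (s z')‖ ≤ ρ₂ (dist z z'))
    -- condition (2): compatibility isometries on overlapping balls
    (ht2 : ∀ x y : (i : ℕ) × (Γ ⧸ N i), x.1 = y.1 →
      (∃ w : (i : ℕ) × (Γ ⧸ N i), dist w x ≤ l x.1 ∧ dist w y ≤ l y.1) →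
      ∃ T : E →ᵃⁱ[ℝ] E, ∀ z : (i : ℕ) × (Γ ⧸ N i),
        dist z x ≤ l x.1 → dist z y ≤ l y.1 →
        ∀ v : H z, t x z v = T (t y z v)) :
    -- conclusion: `Γ` is a-T-menable
    ∃ f : Γ → ℝ,
      f 1 = 0 ∧
      (∀ g : Γ, f g = f g⁻¹) ∧
      (∀ (n : ℕ) (g : Fin n → Γ) (σ : Fin n → ℝ), ∑ j, σ j = 0 →
        ∑ j, ∑ k, σ j * σ k * f ((g j)⁻¹ * g k) ≤ 0) ∧
      (∀ C : ℝ, 0 < C → {g : Γ | f g ≤ C}.Finite) := by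
  have := hFI
  let (i : ℕ) : Fintype (Γ ⧸ N i) := Fintype.ofFinite _
  have hcompat := locallyCompatible_trivialisedSection (s := s) ht2
  have hnear := eventually_dist_smul_le hgen hword hl
  refine exists_proper_conditionallyNegative_of_eventually
    (fun i => displacementEnergy (trivialisedSection t s i)) (fun _ => displacementEnergy_one)
    (fun g => ?_) (fun n g σ hσ => ?_) (fun g => ?_)
    (exists_finite_eventually_le_displacementEnergy hgen hnorm (antitone_nat_of_succ_le hnested)
      htriv hword hl (fun x z z' hz hz' => (ht1 x z z' hz hz').1) hρ₁)
  · filter_upwards [hnear 1, hnear g, hnear g⁻¹] with i h1 hg hg'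
    exact displacementEnergy_inv (hcompat i) (by simpa using h1) hg hg'
  · filter_upwards [hnear 1, eventually_all.2 fun j => hnear (g j)⁻¹,
      eventually_all.2 fun jk : Fin n × Fin n => hnear ((g jk.1)⁻¹ * g jk.2)] with i h1 hg hgg
    exact sum_sum_mul_displacementEnergy_nonpos (hcompat i) (by simpa using h1) g σ hσ hg
      fun j k => hgg (j, k)
  · obtain ⟨m, hm⟩ := exists_mem_wordBall hgen g
    refine ⟨ρ₂ m ^ 2, (eventually_displacementEnergy_le hword hl
      (fun x z z' hz hz' => (ht1 x z z' hz hz').2) hρ₂mono hm).mono fun i hi => ?_⟩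
    exact ⟨displacementEnergy_nonneg g, hi⟩

/-- Let `Γ` be a finitely generated residually finite group with
finite generating set `S`, and `N₁ ⊇ N₂ ⊇ …` nested finite-index normal
subgroups with trivial intersection.  Let `X = ⊔ᵢ Cay(Γ/Nᵢ, S)` be a coarse
disjoint union of the finite Cayley graphs (a box space of `Γ`).  If `X` admits
a fibred coarse embedding into Hilbert space, then `Γ` is a-T-menable: there is
`f : Γ → ℝ` with `f(e) = 0`, `f(g) = f(g⁻¹)`, of conditionally negative type,
and proper (`{g : f(g) ≤ C}` finite for every `C > 0`). -/
theorem box_space_fibred_coarse_embedding_implies_aTmenable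
    (Γ : Type*) [Group Γ] (S : Finset Γ)
    (hgen : Subgroup.closure (S : Set Γ) = ⊤)
    (N : ℕ → Subgroup Γ)
    (hnorm : ∀ i, (N i).Normal)
    (hFI : ∀ i, (N i).FiniteIndex)
    (hnested : ∀ i, N (i + 1) ≤ N i)
    (htriv : (⨅ i, N i) = ⊥)
    -- `X` is a coarse disjoint union of the Cayley graphs `Cay(Γ/Nᵢ, S)`
    [MetricSpace ((i : ℕ) × (Γ ⧸ N i))]
    (hword : ∀ (i : ℕ) (a b : Γ ⧸ N i),
      dist (⟨i, a⟩ : (i : ℕ) × (Γ ⧸ N i)) (⟨i, b⟩ : (i : ℕ) × (Γ ⧸ N i))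
        = (quotientWordDist S a b : ℝ))
    (hsep : ∀ C : ℝ, ∃ M : ℕ, ∀ x y : (i : ℕ) × (Γ ⧸ N i),
      x.1 ≠ y.1 → M ≤ x.1 + y.1 → C ≤ dist x y)
    -- fibred coarse embedding data for `X`
    (H : ((i : ℕ) × (Γ ⧸ N i)) → Type*)
    [∀ x, NormedAddCommGroup (H x)] [∀ x, InnerProductSpace ℝ (H x)]
    (s : ∀ x, H x)
    (ρ₁ ρ₂ : ℝ → ℝ) (hρ₁mono : Monotone ρ₁) (hρ₂mono : Monotone ρ₂)
    (hρ₁ : Filter.Tendsto ρ₁ Filter.atTop Filter.atTop)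
    (hρ₂ : Filter.Tendsto ρ₂ Filter.atTop Filter.atTop)
    (l : ℕ → ℝ) (hl0 : 0 ≤ l 0) (hlmono : Monotone l)
    (hl : Filter.Tendsto l Filter.atTop Filter.atTop)
    (E : Type*) [NormedAddCommGroup E] [InnerProductSpace ℝ E]
    (t : ∀ (_x z : (i : ℕ) × (Γ ⧸ N i)), H z →ᵃⁱ[ℝ] E)
    -- condition (1): control of the section through each local trivialisation
    (ht1 : ∀ x z z' : (i : ℕ) × (Γ ⧸ N i),
      dist z x ≤ l x.1 → dist z' x ≤ l x.1 →
      ρ₁ (dist z z') ≤ ‖t x z (s z) - t x z' (s z')‖ ∧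
      ‖t x z (s z) - t x z' (s z')‖ ≤ ρ₂ (dist z z'))
    -- condition (2): compatibility isometries on overlapping balls
    (ht2 : ∀ x y : (i : ℕ) × (Γ ⧸ N i), x.1 = y.1 →
      (∃ w : (i : ℕ) × (Γ ⧸ N i), dist w x ≤ l x.1 ∧ dist w y ≤ l y.1) →
      ∃ T : E →ᵃⁱ[ℝ] E, ∀ z : (i : ℕ) × (Γ ⧸ N i),
        dist z x ≤ l x.1 → dist z y ≤ l y.1 →
        ∀ v : H z, t x z v = T (t y z v)) :
    -- conclusion: `Γ` is a-T-menable
    ∃ f : Γ → ℝ,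
      f 1 = 0 ∧
      (∀ g : Γ, f g = f g⁻¹) ∧
      (∀ (n : ℕ) (g : Fin n → Γ) (σ : Fin n → ℝ), ∑ j, σ j = 0 →
        ∑ j, ∑ k, σ j * σ k * f ((g j)⁻¹ * g k) ≤ 0) ∧
      (∀ C : ℝ, 0 < C → {g : Γ | f g ≤ C}.Finite) :=
  box_space_fibred_coarse_embedding_implies_aTmenable_general Γ S hgen N hnorm hFI hnested htriv
    hword H s ρ₁ ρ₂ hρ₂mono hρ₁ l hl E t ht1 ht2
end

section
/- Let X be a metric space and 𝒰 a cover of X with multiplicity at most k + 1 and Lebesgue number at least L > 0, such that X ∖ U is nonempty for each U ∈ 𝒰. For U ∈ 𝒰 define φ_U(x) = d(x, X ∖ U) / Σ_{V ∈ 𝒰} d(x, X ∖ V). Then the denominator is at least L at every point (so each φ_U is well defined), {φ_U}_{U∈𝒰} is a partition of unity subordinated to 𝒰 (0 ≤ φ_U ≤ 1, φ_U vanishes outside U, and Σ_{U∈𝒰} φ_U(x) = 1 for every x ∈ X), and moreover |φ_U(x) − φ_U(y)| ≤ ((2k + 3)/L) · d(x, y) for every U ∈ 𝒰 and all x, y ∈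 X. -/
set_option maxHeartbeats 1000000


/-- For a cover `𝒰` of a metric space `X` with multiplicity at
most `k + 1` and Lebesgue number at least `L > 0`, such that `X ∖ U ≠ ∅` for
each `U ∈ 𝒰`, the functions `φ_U(x) = d(x, X ∖ U) / Σ_{V ∈ 𝒰} d(x, X ∖ V)`
form a partition of unity subordinated to `𝒰`: the denominator is at least `L`
everywhere, `0 ≤ φ_U ≤ 1`, `φ_U` vanishes outside `U`, `Σ_U φ_U = 1`, and
`|φ_U(x) − φ_U(y)| ≤ ((2k + 3)/L) · d(x, y)` for all `x, y ∈ X`. -/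
theorem partition_of_unity_from_cover
    {X : Type*} [MetricSpace X] (𝒰 : Set (Set X)) (k : ℕ) (L : ℝ) (hL : 0 < L)
    (hcover : ⋃₀ 𝒰 = Set.univ)
    (hmult : ∀ x : X, {U | U ∈ 𝒰 ∧ x ∈ U}.Finite ∧ {U | U ∈ 𝒰 ∧ x ∈ U}.ncard ≤ k + 1)
    (hleb : ∀ x : X, ∃ U ∈ 𝒰, Metric.closedBall x L ⊆ U)
    (hcompl : ∀ U ∈ 𝒰, Uᶜ.Nonempty)
    (φ : Set X → X → ℝ)
    (hφ : ∀ U : Set X, ∀ x : X,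
      φ U x = Metric.infDist x Uᶜ / ∑' V : 𝒰, Metric.infDist x (↑V)ᶜ) :
    (∀ x : X, L ≤ ∑' V : 𝒰, Metric.infDist x (↑V)ᶜ) ∧
    (∀ U ∈ 𝒰, ∀ x : X, 0 ≤ φ U x ∧ φ U x ≤ 1) ∧
    (∀ U ∈ 𝒰, ∀ x : X, x ∉ U → φ U x = 0) ∧
    (∀ x : X, ∑' U : 𝒰, φ (↑U) x = 1) ∧
    (∀ U ∈ 𝒰, ∀ x y : X, |φ U x - φ U y| ≤ ((2 * k + 3) / L) * dist x y) := by
  classical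
  set S : X → ℝ := fun x => ∑' V : 𝒰, Metric.infDist x (↑V)ᶜ with hS
  -- finiteness of the support
  have hfin : ∀ x : X, {V : ↥𝒰 | x ∈ (V : Set X)}.Finite := by
    intro x
    have : {V : ↥𝒰 | x ∈ (V : Set X)} = Subtype.val ⁻¹' {U | U ∈ 𝒰 ∧ x ∈ U} := by
      ext V; simp [V.2]
    rw [this]
    exact Set.Finite.preimage (Subtype.val_injective.injOn) (hmult x).1
  have hzero : ∀ (x : X) (V : ↥𝒰), x ∉ (V : Set X) → Metric.infDist x ((V : Set X))ᶜ = 0 :=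
    fun x V hx => Metric.infDist_zero_of_mem hx
  have hcard : ∀ x : X, (hfin x).toFinset.card ≤ k + 1 := by
    intro x
    have h1 : {V : ↥𝒰 | x ∈ (V : Set X)}.ncard
        = (Subtype.val '' {V : ↥𝒰 | x ∈ (V : Set X)}).ncard :=
      (Set.ncard_image_of_injective _ Subtype.val_injective).symm
    have h2 : Subtype.val '' {V : ↥𝒰 | x ∈ (V : Set X)} ⊆ {U | U ∈ 𝒰 ∧ x ∈ U} := by
      rintro U ⟨V, hV, rfl⟩; exact ⟨V.2, hV⟩
    have h3 : (Subtype.val '' {V : ↥𝒰 | x ∈ (V : Set X)}).ncard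
        ≤ {U | U ∈ 𝒰 ∧ x ∈ U}.ncard := Set.ncard_le_ncard h2 (hmult x).1
    calc (hfin x).toFinset.card = {V : ↥𝒰 | x ∈ (V : Set X)}.ncard :=
          (Set.ncard_eq_toFinset_card _ (hfin x)).symm
      _ ≤ {U | U ∈ 𝒰 ∧ x ∈ U}.ncard := h1 ▸ h3
      _ ≤ k + 1 := (hmult x).2
  have htsum : ∀ x : X, S x = ∑ V ∈ (hfin x).toFinset, Metric.infDist x ((V : Set X))ᶜ := by
    intro x
    exact tsum_eq_sum (fun V hV => hzero x V (by simpa using hV))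
  -- lower bound on the denominator
  have hS_lb : ∀ x : X, L ≤ S x := by
    intro x
    obtain ⟨U, hU, hball⟩ := hleb x
    have hxU : x ∈ U := hball (Metric.mem_closedBall_self hL.le)
    have hmem : (⟨U, hU⟩ : ↥𝒰) ∈ (hfin x).toFinset := by
      simp [Set.Finite.mem_toFinset]; exact hxU
    have hLU : L ≤ Metric.infDist x Uᶜ := by
      by_contra h
      push_neg at h
      obtain ⟨y, hy, hdy⟩ := (Metric.infDist_lt_iff (hcompl U hU)).1 h
      exact hy (hball (by simpa [Metric.mem_closedBall, dist_comm] using hdy.le))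
    have h := Finset.single_le_sum (f := fun V : ↥𝒰 => Metric.infDist x ((V : Set X))ᶜ)
      (fun V _ => Metric.infDist_nonneg) hmem
    rw [htsum x]
    exact le_trans hLU h
  have hS_pos : ∀ x : X, 0 < S x := fun x => lt_of_lt_of_le hL (hS_lb x)
  -- numerator is at most the denominator
  have hnum_le : ∀ U ∈ 𝒰, ∀ x : X, Metric.infDist x Uᶜ ≤ S x := by
    intro U hU x
    by_cases hxU : x ∈ U
    · have hmem : (⟨U, hU⟩ : ↥𝒰) ∈ (hfin x).toFinset := by
        simp [Set.Finite.mem_toFinset]; exact hxU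
      have h := Finset.single_le_sum (f := fun V : ↥𝒰 => Metric.infDist x ((V : Set X))ᶜ)
        (fun V _ => Metric.infDist_nonneg) hmem
      rw [htsum x]
      exact h
    · rw [Metric.infDist_zero_of_mem (Set.mem_compl hxU)]
      exact (hS_pos x).le
  refine ⟨hS_lb, ?_, ?_, ?_, ?_⟩
  · intro U hU x
    rw [hφ]
    constructor
    · exact div_nonneg Metric.infDist_nonneg (hS_pos x).le
    · exact div_le_one_of_le₀ (hnum_le U hU x) (hS_pos x).le
  · intro U hU x hxU
    rw [hφ, Metric.infDist_zero_of_mem (Set.mem_compl hxU), zero_div]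
  · intro x
    have : ∑' U : 𝒰, φ (↑U) x = ∑' U : 𝒰, Metric.infDist x ((U : Set X))ᶜ / S x := by
      apply tsum_congr; intro U; rw [hφ]
    rw [this, tsum_div_const]
    exact div_self (hS_pos x).ne'
  -- Lipschitz bound
  · intro U hU x y
    set a := Metric.infDist x Uᶜ with ha
    set b := Metric.infDist y Uᶜ with hb
    set d := dist x y with hd
    have hd0 : 0 ≤ d := dist_nonneg
    -- 1-Lipschitz of infDist
    have hlip : ∀ (s : Set X) (u v : X),
        |Metric.infDist u s - Metric.infDist v s| ≤ dist u v := by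
      intro s u v
      have h1 := Metric.infDist_le_infDist_add_dist (x := u) (y := v) (s := s)
      have h2 := Metric.infDist_le_infDist_add_dist (x := v) (y := u) (s := s)
      rw [abs_sub_le_iff]
      constructor <;> [linarith; linarith [dist_comm u v]]
    have hab : |a - b| ≤ d := hlip Uᶜ x y
    -- bound on |S x - S y|
    have hSxy : |S x - S y| ≤ (2 * k + 2) * d := by
      set s : Finset ↥𝒰 := (hfin x).toFinset ∪ (hfin y).toFinset with hs'
      have hx' : S x = ∑ V ∈ s, Metric.infDist x ((V : Set X))ᶜ := by
        refine tsum_eq_sum (fun V hV => hzero x V ?_)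
        intro hxV
        exact hV (Finset.mem_union_left _ ((hfin x).mem_toFinset.2 hxV))
      have hy' : S y = ∑ V ∈ s, Metric.infDist y ((V : Set X))ᶜ := by
        refine tsum_eq_sum (fun V hV => hzero y V ?_)
        intro hyV
        exact hV (Finset.mem_union_right _ ((hfin y).mem_toFinset.2 hyV))
      have hcards : (s.card : ℝ) ≤ 2 * k + 2 := by
        have hu : s.card ≤ (hfin x).toFinset.card + (hfin y).toFinset.card := by
          rw [hs']; exact Finset.card_union_le _ _
        have h1 := hcard x
        have h2 := hcard y
        have : s.card ≤ 2 * k + 2 := by omega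
        exact_mod_cast this
      calc |S x - S y|
          = |∑ V ∈ s, (Metric.infDist x ((V : Set X))ᶜ - Metric.infDist y ((V : Set X))ᶜ)| := by
            rw [hx', hy', Finset.sum_sub_distrib]
        _ ≤ ∑ V ∈ s, |Metric.infDist x ((V : Set X))ᶜ - Metric.infDist y ((V : Set X))ᶜ| :=
            Finset.abs_sum_le_sum_abs _ _
        _ ≤ ∑ _V ∈ s, d := Finset.sum_le_sum (fun V _ => hlip _ x y)
        _ = s.card * d := by rw [Finset.sum_const, nsmul_eq_mul]
        _ ≤ (2 * k + 2) * d := by exact mul_le_mul_of_nonneg_right hcards hd0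
    -- assemble
    have hSx := hS_lb x
    have hSy := hS_lb y
    have hSxp := hS_pos x
    have hSyp := hS_pos y
    have hbS : b ≤ S y := hnum_le U hU y
    have hb0 : 0 ≤ b := Metric.infDist_nonneg
    rw [hφ U x, hφ U y]
    have key : a / S x - b / S y = (a - b) / S x + (b / S y) * ((S y - S x) / S x) := by
      field_simp
      ring
    calc |a / S x - b / S y|
        = |(a - b) / S x + (b / S y) * ((S y - S x) / S x)| := by rw [key]
      _ ≤ |(a - b) / S x| + |(b / S y) * ((S y - S x) / S x)| := abs_add_le _ _
      _ = |a - b| / S x + (b / S y) * (|S y - S x| / S x) := by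
          simp only [abs_div, abs_mul, abs_of_pos hSxp, abs_of_pos hSyp, abs_of_nonneg hb0]
      _ ≤ d / L + 1 * ((2 * k + 2) * d / L) := by
          refine add_le_add (div_le_div₀ hd0 hab hL hSx) (mul_le_mul
            (div_le_one_of_le₀ hbS hSyp.le)
            (div_le_div₀ (by positivity) (abs_sub_comm (S y) (S x) ▸ hSxy) hL hSx)
            (by positivity) zero_le_one)
      _ = (2 * k + 3) / L * d := by field_simp; ring
end

section
/- Let X be a metric space and 𝒰 a cover of X with multiplicity at most 2 and Lebesgue number at least L > 0, such that X ∖ U is nonempty for each U ∈ 𝒰, and let φ_U(x) = d(x, X ∖ U) / Σ_{V ∈ 𝒰} d(x, X ∖ V) be the associated partition of unity. Define Φ_U := √(φ_U). Then Σ_{U∈𝒰} Φ_U(x)² = 1 for every x ∈ X, and |Φ_U(x) − Φ_U(y)| ≤ √((5/L) · d(x, y)) for every U ∈ 𝒰 and all x, y ∈ X. -/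
private lemma sqrt_sub_sqrt_le {a b : ℝ} (ha : 0 ≤ a) (hb : 0 ≤ b) :
    |Real.sqrt a - Real.sqrt b| ≤ Real.sqrt |a - b| := by
  have key : ∀ a b : ℝ, 0 ≤ b → b ≤ a →
      Real.sqrt a - Real.sqrt b ≤ Real.sqrt (a - b) := by
    intro a b hb hba
    nlinarith [Real.sq_sqrt (le_trans hb hba), Real.sq_sqrt hb,
      Real.sq_sqrt (sub_nonneg.2 hba), Real.sqrt_nonneg a, Real.sqrt_nonneg b,
      Real.sqrt_nonneg (a - b)]
  rcases le_total b a with h | h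
  · rw [abs_of_nonneg (sub_nonneg.2 h),
      abs_of_nonneg (sub_nonneg.2 (Real.sqrt_le_sqrt h))]
    exact key a b hb h
  · rw [abs_of_nonpos (sub_nonpos.2 h),
      abs_of_nonpos (sub_nonpos.2 (Real.sqrt_le_sqrt h)), neg_sub, neg_sub]
    exact key b a ha h

/-- For a cover `𝒰` of a metric space `X` with multiplicity at
most `2` and Lebesgue number at least `L > 0` (with `X ∖ U ≠ ∅` for each
`U ∈ 𝒰`), and the associated partition of unity
`φ_U(x) = d(x, X ∖ U) / Σ_{V ∈ 𝒰} d(x, X ∖ V)`, the functions `Φ_U := √φ_U`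
satisfy `Σ_U Φ_U(x)² = 1` and `|Φ_U(x) − Φ_U(y)| ≤ √((5/L)·d(x,y))`. -/
theorem l2_partition_of_unity_from_cover
    {X : Type*} [MetricSpace X] (𝒰 : Set (Set X)) (L : ℝ) (hL : 0 < L)
    (hcover : ⋃₀ 𝒰 = Set.univ)
    (hmult : ∀ x : X, {U | U ∈ 𝒰 ∧ x ∈ U}.Finite ∧ {U | U ∈ 𝒰 ∧ x ∈ U}.ncard ≤ 2)
    (hleb : ∀ x : X, ∃ U ∈ 𝒰, Metric.closedBall x L ⊆ U)
    (hcompl : ∀ U ∈ 𝒰, Uᶜ.Nonempty)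
    (φ : Set X → X → ℝ)
    (hφ : ∀ U : Set X, ∀ x : X,
      φ U x = Metric.infDist x Uᶜ / ∑' V : 𝒰, Metric.infDist x (↑V)ᶜ)
    (Φ : Set X → X → ℝ)
    (hΦ : ∀ U : Set X, ∀ x : X, Φ U x = Real.sqrt (φ U x)) :
    (∀ x : X, ∑' U : 𝒰, (Φ (↑U) x) ^ 2 = 1) ∧
    (∀ U ∈ 𝒰, ∀ x y : X, |Φ U x - Φ U y| ≤ Real.sqrt ((5 / L) * dist x y)) := by
  classical
  set f : X → ↥𝒰 → ℝ := fun x V => Metric.infDist x (↑V)ᶜ with hf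
  set S : X → ℝ := fun x => ∑' V : 𝒰, f x V with hSdef
  -- support finiteness
  have hfin : ∀ x : X, ({V : ↥𝒰 | x ∈ (V : Set X)}).Finite := by
    intro x
    have h1 : (Subtype.val ⁻¹' {U | U ∈ 𝒰 ∧ x ∈ U} : Set ↥𝒰).Finite :=
      (hmult x).1.preimage Subtype.val_injective.injOn
    exact h1.subset fun V hV => ⟨V.2, hV⟩
  have hsupp : ∀ x : X, Function.support (f x) ⊆ {V : ↥𝒰 | x ∈ (V : Set X)} := by
    intro x V hV
    by_contra h
    exact hV (Metric.infDist_zero_of_mem h)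
  have hsum : ∀ x : X, Summable (f x) := fun x =>
    summable_of_finite_support ((hfin x).subset (hsupp x))
  have hfnonneg : ∀ x V, 0 ≤ f x V := fun x V => Metric.infDist_nonneg
  -- cardinality bound for supports
  have hcard : ∀ x : X, ({V : ↥𝒰 | x ∈ (V : Set X)}).ncard ≤ 2 := by
    intro x
    have hsub : {V : ↥𝒰 | x ∈ (V : Set X)} = Subtype.val ⁻¹' {U | U ∈ 𝒰 ∧ x ∈ U} := by
      ext V; exact ⟨fun hV => ⟨V.2, hV⟩, fun hV => hV.2⟩
    rw [hsub]
    have himg : Subtype.val '' (Subtype.val ⁻¹' {U | U ∈ 𝒰 ∧ x ∈ U} : Set ↥𝒰)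
        ⊆ {U | U ∈ 𝒰 ∧ x ∈ U} := Set.image_preimage_subset _ _
    calc (Subtype.val ⁻¹' {U | U ∈ 𝒰 ∧ x ∈ U} : Set ↥𝒰).ncard
        = (Subtype.val '' (Subtype.val ⁻¹' {U | U ∈ 𝒰 ∧ x ∈ U} : Set ↥𝒰)).ncard :=
          (Set.ncard_image_of_injective _ Subtype.val_injective).symm
      _ ≤ ({U | U ∈ 𝒰 ∧ x ∈ U}).ncard :=
          Set.ncard_le_ncard himg (hmult x).1
      _ ≤ 2 := (hmult x).2
  -- lower bound for S
  have hSL : ∀ x : X, L ≤ S x := by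
    intro x
    obtain ⟨U, hU, hball⟩ := hleb x
    have h1 : L ≤ f x ⟨U, hU⟩ := by
      by_contra h
      push_neg at h
      obtain ⟨y, hy, hdy⟩ := (Metric.infDist_lt_iff (hcompl U hU)).1 h
      exact hy (hball (by simpa [Metric.mem_closedBall, dist_comm] using hdy.le))
    exact le_trans h1 (Summable.le_tsum (hsum x) ⟨U, hU⟩ fun V _ => hfnonneg x V)
  have hSpos : ∀ x : X, 0 < S x := fun x => lt_of_lt_of_le hL (hSL x)
  -- tsum as finite sum over any finset containing the support
  have htsum_eq : ∀ (x : X) (F : Finset ↥𝒰),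
      (∀ V : ↥𝒰, x ∈ (V : Set X) → V ∈ F) → S x = ∑ V ∈ F, f x V := by
    intro x F hF
    exact tsum_eq_sum fun V hV => by
      by_contra h
      exact hV (hF V (hsupp x h))
  -- Lipschitz bound for S
  have hSdiff : ∀ x y : X, |S x - S y| ≤ 4 * dist x y := by
    intro x y
    set F : Finset ↥𝒰 := (hfin x).toFinset ∪ (hfin y).toFinset with hF
    have hx : S x = ∑ V ∈ F, f x V :=
      htsum_eq x F fun V hV => Finset.mem_union_left _ ((hfin x).mem_toFinset.2 hV)
    have hy : S y = ∑ V ∈ F, f y V :=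
      htsum_eq y F fun V hV => Finset.mem_union_right _ ((hfin y).mem_toFinset.2 hV)
    have hcardF : (F.card : ℝ) ≤ 4 := by
      have h1 : F.card ≤ (hfin x).toFinset.card + (hfin y).toFinset.card :=
        Finset.card_union_le _ _
      have h2 : (hfin x).toFinset.card ≤ 2 := by
        rw [← Set.ncard_eq_toFinset_card _ (hfin x)]; exact hcard x
      have h3 : (hfin y).toFinset.card ≤ 2 := by
        rw [← Set.ncard_eq_toFinset_card _ (hfin y)]; exact hcard y
      have : F.card ≤ 4 := le_trans h1 (by omega)
      exact_mod_cast this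
    have hterm : ∀ V : ↥𝒰, |f x V - f y V| ≤ dist x y := by
      intro V
      rw [abs_sub_le_iff]
      constructor
      · have := Metric.infDist_le_infDist_add_dist (x := x) (y := y) (s := ((V : Set X))ᶜ)
        linarith
      · have := Metric.infDist_le_infDist_add_dist (x := y) (y := x) (s := ((V : Set X))ᶜ)
        rw [dist_comm] at this
        linarith
    calc |S x - S y| = |∑ V ∈ F, (f x V - f y V)| := by rw [hx, hy, Finset.sum_sub_distrib]
      _ ≤ ∑ V ∈ F, |f x V - f y V| := Finset.abs_sum_le_sum_abs _ _
      _ ≤ ∑ _V ∈ F, dist x y := Finset.sum_le_sum fun V _ => hterm V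
      _ = F.card * dist x y := by rw [Finset.sum_const, nsmul_eq_mul]
      _ ≤ 4 * dist x y := by
          apply mul_le_mul_of_nonneg_right hcardF dist_nonneg
  -- nonnegativity of φ
  have hφnonneg : ∀ U x, 0 ≤ φ U x := by
    intro U x
    rw [hφ]
    exact div_nonneg Metric.infDist_nonneg (le_of_lt (hSpos x))
  -- φ is Lipschitz with constant 5/L
  have hφLip : ∀ U ∈ 𝒰, ∀ x y : X, |φ U x - φ U y| ≤ (5 / L) * dist x y := by
    intro U hU x y
    set a := Metric.infDist x Uᶜ with haa
    set b := Metric.infDist y Uᶜ with hbb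
    have hab : |a - b| ≤ dist x y := by
      rw [abs_sub_le_iff]
      constructor
      · have := Metric.infDist_le_infDist_add_dist (x := x) (y := y) (s := Uᶜ)
        linarith
      · have := Metric.infDist_le_infDist_add_dist (x := y) (y := x) (s := Uᶜ)
        rw [dist_comm] at this
        linarith
    have hbS : b ≤ S y := Summable.le_tsum (hsum y) ⟨U, hU⟩ fun V _ => hfnonneg y V
    have hb0 : 0 ≤ b := Metric.infDist_nonneg
    have hSx := hSpos x
    have hSy := hSpos y
    have hLx := hSL x
    have hLy := hSL y
    have hSd := hSdiff x y
    have hd0 : (0:ℝ) ≤ dist x y := dist_nonneg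
    have heq : φ U x - φ U y = ((a - b) * S y + b * (S y - S x)) / (S x * S y) := by
      have hrw : ∀ z : X, (∑' V : 𝒰, Metric.infDist z (↑V)ᶜ) = S z := fun z => rfl
      rw [hφ, hφ, hrw, hrw]
      field_simp
      ring
    rw [heq, abs_div, abs_of_pos (mul_pos hSx hSy), div_le_iff₀ (mul_pos hSx hSy)]
    have h1 : |(a - b) * S y + b * (S y - S x)| ≤ |a - b| * S y + b * |S y - S x| := by
      calc |(a - b) * S y + b * (S y - S x)| ≤ |(a - b) * S y| + |b * (S y - S x)| :=
            abs_add_le _ _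
        _ = |a - b| * S y + b * |S y - S x| := by
            rw [abs_mul, abs_mul, abs_of_pos hSy, abs_of_nonneg hb0]
    have h2 : |S y - S x| ≤ 4 * dist x y := by rw [abs_sub_comm]; exact hSd
    have h3 : |a - b| * S y + b * |S y - S x| ≤ dist x y * S y + S y * (4 * dist x y) := by
      have := mul_le_mul_of_nonneg_right hab (le_of_lt hSy)
      have := mul_le_mul (le_refl b) h2 (abs_nonneg _) hb0
      nlinarith
    have h4 : dist x y * S y + S y * (4 * dist x y) ≤ 5 / L * dist x y * (S x * S y) := by
      have hkey : 5 * dist x y * S y * L ≤ 5 * dist x y * S y * S x := by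
        apply mul_le_mul_of_nonneg_left hLx
        positivity
      rw [div_mul_eq_mul_div, div_mul_eq_mul_div, le_div_iff₀ hL]
      nlinarith
    linarith
  constructor
  · -- sum of squares equals 1
    intro x
    have hsq : ∀ U : ↥𝒰, (Φ (↑U) x) ^ 2 = φ (↑U) x := by
      intro U
      rw [hΦ, Real.sq_sqrt (hφnonneg _ x)]
    calc ∑' U : 𝒰, (Φ (↑U) x) ^ 2 = ∑' U : 𝒰, φ (↑U) x := by
          exact tsum_congr hsq
      _ = ∑' U : 𝒰, f x U / S x := by
          refine tsum_congr fun U => ?_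
          have hrw : (∑' V : 𝒰, Metric.infDist x (↑V)ᶜ) = S x := rfl
          rw [hφ, hrw]
      _ = (∑' U : 𝒰, f x U) / S x := tsum_div_const
      _ = 1 := div_self (ne_of_gt (hSpos x))
  · -- Lipschitz bound for Φ
    intro U hU x y
    rw [hΦ, hΦ]
    calc |Real.sqrt (φ U x) - Real.sqrt (φ U y)| ≤ Real.sqrt |φ U x - φ U y| :=
          sqrt_sub_sqrt_le (hφnonneg U x) (hφnonneg U y)
      _ ≤ Real.sqrt ((5 / L) * dist x y) :=
          Real.sqrt_le_sqrt (hφLip U hU x y)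
end

section
/- Let Z be a metric space and z₀ ∈ Z. For n ∈ ℕ set Z_n := {z ∈ Z : n³ − n ≤ d(z, z₀) ≤ (n+1)³ + (n+1)}, and let Y₀ be the union of the Z_n over even n and Y₁ the union over odd n. Then Y₀ ∪ Y₁ = Z, and the decomposition is coarsely excisive: for every R > 0 there exists S > 0 such that N_R(Y₀) ∩ N_R(Y₁) ⊆ N_S(Y₀ ∩ Y₁), where N_R(A) := {z ∈ Z : d(z, A) ≤ R}. -/
private lemma cube_add_mono {a b : ℝ} (ha : 0 ≤ a) (hab : a ≤ b) :
    a ^ 3 + a ≤ b ^ 3 + b := by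
  have h3 : a ^ 3 ≤ b ^ 3 := pow_le_pow_left₀ ha hab 3
  linarith

set_option maxHeartbeats 1000000 in
/-- With `Zₙ := {z : n³ - n ≤ d(z, z₀) ≤ (n+1)³ + (n+1)}`,
`Y₀ := ⋃_{n even} Zₙ` and `Y₁ := ⋃_{n odd} Zₙ`, one has `Y₀ ∪ Y₁ = Z` and the
decomposition is coarsely excisive: for every `R > 0` there is `S > 0` with
`N_R(Y₀) ∩ N_R(Y₁) ⊆ N_S(Y₀ ∩ Y₁)`, where `N_R(A) = {z : d(z, A) ≤ R}`. -/
theorem annular_decomposition_coarsely_excisive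
    {Z : Type*} [MetricSpace Z] (z₀ : Z)
    (Zn : ℕ → Set Z)
    (hZn : ∀ n : ℕ, Zn n =
      {z : Z | (n : ℝ) ^ 3 - n ≤ dist z z₀ ∧ dist z z₀ ≤ ((n : ℝ) + 1) ^ 3 + ((n : ℝ) + 1)})
    (Y₀ Y₁ : Set Z)
    (hY₀ : Y₀ = ⋃ n ∈ {n : ℕ | Even n}, Zn n)
    (hY₁ : Y₁ = ⋃ n ∈ {n : ℕ | Odd n}, Zn n) :
    Y₀ ∪ Y₁ = Set.univ ∧
    ∀ R : ℝ, 0 < R → ∃ S : ℝ, 0 < S ∧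
      {z : Z | Metric.infDist z Y₀ ≤ R} ∩ {z : Z | Metric.infDist z Y₁ ≤ R} ⊆
        {z : Z | Metric.infDist z (Y₀ ∩ Y₁) ≤ S} := by
  have memY₀ : ∀ (n : ℕ), Even n → ∀ y, y ∈ Zn n → y ∈ Y₀ := by
    intro n hn y hy
    rw [hY₀]
    exact Set.mem_biUnion hn hy
  have memY₁ : ∀ (n : ℕ), Odd n → ∀ y, y ∈ Zn n → y ∈ Y₁ := by
    intro n hn y hy
    rw [hY₁]
    exact Set.mem_biUnion hn hy
  have hz00 : z₀ ∈ Zn 0 := by rw [hZn]; constructor <;> norm_num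
  have hz01 : z₀ ∈ Zn 1 := by rw [hZn]; constructor <;> norm_num
  have hz0Y₀ : z₀ ∈ Y₀ := memY₀ 0 Even.zero z₀ hz00
  have hz0Y₁ : z₀ ∈ Y₁ := memY₁ 1 odd_one z₀ hz01
  have hz0I : z₀ ∈ Y₀ ∩ Y₁ := ⟨hz0Y₀, hz0Y₁⟩
  constructor
  · -- union is everything
    ext z
    simp only [Set.mem_univ, iff_true, Set.mem_union]
    set r := dist z z₀ with hr_def
    have hr : 0 ≤ r := dist_nonneg
    have hex : ∃ k : ℕ, r < ((k : ℝ) + 1) ^ 3 - ((k : ℝ) + 1) := by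
      obtain ⟨k, hk⟩ := exists_nat_gt r
      refine ⟨k + 1, ?_⟩
      push_cast
      nlinarith [sq_nonneg (k : ℝ), Nat.cast_nonneg (α := ℝ) k]
    set n := Nat.find hex with hn_def
    have hn1 : r < ((n : ℝ) + 1) ^ 3 - ((n : ℝ) + 1) := Nat.find_spec hex
    have hn2 : (n : ℝ) ^ 3 - n ≤ r := by
      rcases Nat.eq_zero_or_pos n with h0 | h0
      · rw [h0]; simpa using hr
      · obtain ⟨m, hm⟩ := Nat.exists_eq_succ_of_ne_zero h0.ne'
        have := Nat.find_min hex (m := m) (by omega)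
        push_neg at this
        rw [hm]; push_cast; push_cast at this; linarith
    have hzn : z ∈ Zn n := by
      rw [hZn]
      exact ⟨hn2, by linarith [Nat.cast_nonneg (α := ℝ) n]⟩
    rcases Nat.even_or_odd n with he | ho
    · exact Or.inl (memY₀ n he z hzn)
    · exact Or.inr (memY₁ n ho z hzn)
  · intro R hR
    refine ⟨(R + 1) ^ 3 + R + 2, by positivity, ?_⟩
    rintro z ⟨hz0, hz1⟩
    simp only [Set.mem_setOf_eq] at hz0 hz1 ⊢
    have h0 : Metric.infDist z Y₀ < R + 1 := lt_of_le_of_lt hz0 (by linarith)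
    have h1 : Metric.infDist z Y₁ < R + 1 := lt_of_le_of_lt hz1 (by linarith)
    rw [Metric.infDist_lt_iff ⟨z₀, hz0Y₀⟩] at h0
    rw [Metric.infDist_lt_iff ⟨z₀, hz0Y₁⟩] at h1
    obtain ⟨y₀, hy₀Y, hd0⟩ := h0
    obtain ⟨y₁, hy₁Y, hd1⟩ := h1
    -- easy cases: a witness already in the intersection
    by_cases hc0 : y₀ ∈ Y₁
    · have := Metric.infDist_le_dist_of_mem (s := Y₀ ∩ Y₁) (x := z) ⟨hy₀Y, hc0⟩
      nlinarith [sq_nonneg R, sq_nonneg (R + 1)]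
    by_cases hc1 : y₁ ∈ Y₀
    · have := Metric.infDist_le_dist_of_mem (s := Y₀ ∩ Y₁) (x := z) ⟨hc1, hy₁Y⟩
      nlinarith [sq_nonneg R, sq_nonneg (R + 1)]
    -- extract the annuli
    have hy₀Y' := hy₀Y
    have hy₁Y' := hy₁Y
    rw [hY₀] at hy₀Y'
    rw [hY₁] at hy₁Y'
    simp only [Set.mem_setOf_eq, Set.mem_iUnion, exists_prop] at hy₀Y' hy₁Y'
    obtain ⟨n, hne, hy₀n⟩ := hy₀Y'
    obtain ⟨p, hpo, hy₁p⟩ := hy₁Y'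
    rw [hZn] at hy₀n hy₁p
    obtain ⟨hn_lo, hn_hi⟩ := hy₀n
    obtain ⟨hp_lo, hp_hi⟩ := hy₁p
    set r₀ := dist y₀ z₀ with hr₀
    set r₁ := dist y₁ z₀ with hr₁
    have hnotZ₁ : ∀ k : ℕ, Odd k → y₀ ∉ Zn k := by
      intro k hk hmem
      exact hc0 (memY₁ k hk y₀ hmem)
    have hnotZ₀ : ∀ k : ℕ, Even k → y₁ ∉ Zn k := by
      intro k hk hmem
      exact hc1 (memY₀ k hk y₁ hmem)
    -- y₀ bounds: n³ + n < r₀ < (n+1)³ - (n+1)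
    have hA : r₀ < ((n : ℝ) + 1) ^ 3 - ((n : ℝ) + 1) := by
      have h := hnotZ₁ (n + 1) (Even.add_one hne)
      rw [hZn] at h
      simp only [Set.mem_setOf_eq, not_and_or, not_le] at h
      rcases h with h | h
      · push_cast at h ⊢; linarith
      · exfalso; push_cast at h; nlinarith [Nat.cast_nonneg (α := ℝ) n]
    have hn_pos : n ≠ 0 := by
      rintro rfl
      simp only [Nat.cast_zero] at hA
      have : (0 : ℝ) ≤ r₀ := dist_nonneg
      nlinarith
    obtain ⟨m, rfl⟩ := Nat.exists_eq_succ_of_ne_zero hn_pos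
    have hmodd : Odd m := Nat.not_even_iff_odd.mp (Nat.even_add_one.mp hne)
    have hB : ((m : ℝ) + 1) ^ 3 + ((m : ℝ) + 1) < r₀ := by
      have h := hnotZ₁ m hmodd
      rw [hZn] at h
      simp only [Set.mem_setOf_eq, not_and_or, not_le] at h
      rcases h with h | h
      · exfalso
        push_cast at hn_lo
        nlinarith [Nat.cast_nonneg (α := ℝ) m]
      · exact h
    -- y₁ bounds: p³ + p < r₁ < (p+1)³ - (p+1)
    have hC : r₁ < ((p : ℝ) + 1) ^ 3 - ((p : ℝ) + 1) := by
      have h := hnotZ₀ (p + 1) (Odd.add_one hpo)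
      rw [hZn] at h
      simp only [Set.mem_setOf_eq, not_and_or, not_le] at h
      rcases h with h | h
      · push_cast at h ⊢; linarith
      · exfalso; push_cast at h; nlinarith [Nat.cast_nonneg (α := ℝ) p]
    have hp_pos : p ≠ 0 := by
      rintro rfl
      exact (Nat.not_odd_iff_even.mpr Even.zero) hpo
    obtain ⟨q, rfl⟩ := Nat.exists_eq_succ_of_ne_zero hp_pos
    have hqeven : Even q := Nat.not_odd_iff_even.mp (Nat.odd_add_one.mp hpo)
    have hD : ((q : ℝ) + 1) ^ 3 + ((q : ℝ) + 1) < r₁ := by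
      have h := hnotZ₀ q hqeven
      rw [hZn] at h
      simp only [Set.mem_setOf_eq, not_and_or, not_le] at h
      rcases h with h | h
      · exfalso
        push_cast at hp_lo
        nlinarith [Nat.cast_nonneg (α := ℝ) q]
      · exact h
    -- distance between the two radii
    have hdy : dist y₀ y₁ < 2 * (R + 1) := by
      calc dist y₀ y₁ ≤ dist y₀ z + dist z y₁ := dist_triangle _ _ _
      _ < 2 * (R + 1) := by rw [dist_comm y₀ z]; linarith
    have habs : |r₀ - r₁| ≤ dist y₀ y₁ := abs_dist_sub_le _ _ _
    have habs' : r₀ - r₁ ≤ dist y₀ y₁ ∧ r₁ - r₀ ≤ dist y₀ y₁ := abs_sub_le_iff.mp habs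
    -- m+1 ≠ q+1 by parity
    have hne_idx : m + 1 ≠ q + 1 := by
      have : m ≠ q := fun e => (Nat.not_odd_iff_even.mpr hqeven) (e ▸ hmodd)
      omega
    have key : Metric.infDist z (Y₀ ∩ Y₁) ≤ dist z z₀ :=
      Metric.infDist_le_dist_of_mem hz0I
    have triv0 : dist z z₀ ≤ dist z y₀ + r₀ := dist_triangle _ _ _
    have triv1 : dist z z₀ ≤ dist z y₁ + r₁ := dist_triangle _ _ _
    rcases lt_or_gt_of_ne hne_idx with hlt | hgt
    · -- m+1 < q+1, so m+2 ≤ q+1, hence (q+1)³+(q+1) ≥ (m+2)³+(m+2)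
      have hcast : ((m : ℝ) + 2) ≤ (q : ℝ) + 1 := by
        have : (m : ℝ) + 1 < (q : ℝ) + 1 := by exact_mod_cast hlt
        have : ((m : ℝ) + 1) + 1 ≤ (q : ℝ) + 1 := by
          have : (m : ℕ) + 1 + 1 ≤ q + 1 := hlt
          exact_mod_cast this
        linarith
      have hmono : ((m : ℝ) + 2) ^ 3 + ((m : ℝ) + 2) ≤ ((q : ℝ) + 1) ^ 3 + ((q : ℝ) + 1) :=
        cube_add_mono (by positivity) hcast
      -- r₁ > (m+2)³+(m+2), r₀ < (m+2)³ - (m+2); so r₁ - r₀ > 2(m+2)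
      have hgap : 2 * ((m : ℝ) + 2) < r₁ - r₀ := by
        push_cast at hA
        linarith
      have hmR : (m : ℝ) + 1 < R := by linarith [habs'.2]
      -- r₀ < (m+2)³ - (m+2) < (R+1)³
      have hr₀small : r₀ < (R + 1) ^ 3 := by
        have h1 : ((m : ℝ) + 2) ^ 3 ≤ (R + 1) ^ 3 :=
          pow_le_pow_left₀ (by positivity) (by linarith) 3
        push_cast at hA
        nlinarith [Nat.cast_nonneg (α := ℝ) m]
      linarith
    · -- q+1 < m+1 : symmetric
      have hcast : ((q : ℝ) + 2) ≤ (m : ℝ) + 1 := by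
        have : (q : ℕ) + 1 + 1 ≤ m + 1 := hgt
        exact_mod_cast this
      have hmono : ((q : ℝ) + 2) ^ 3 + ((q : ℝ) + 2) ≤ ((m : ℝ) + 1) ^ 3 + ((m : ℝ) + 1) :=
        cube_add_mono (by positivity) hcast
      have hgap : 2 * ((q : ℝ) + 2) < r₀ - r₁ := by
        push_cast at hC
        linarith
      have hqR : (q : ℝ) + 1 < R := by linarith [habs'.1]
      have hr₁small : r₁ < (R + 1) ^ 3 := by
        have h1 : ((q : ℝ) + 2) ^ 3 ≤ (R + 1) ^ 3 :=
          pow_le_pow_left₀ (by positivity) (by linarith) 3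
        push_cast at hC
        nlinarith [Nat.cast_nonneg (α := ℝ) q]
      linarith
end
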